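/- Let G be a finite non-cyclic group of odd order. Then the proper enhanced power graph P_E**(G) is a line graph of some graph if and only if the intersection of any two distinct maximal cyclic subgroups of G equals T(G), the intersection of all maximal cyclic subgroups of G. -/

import Mathlib

open Subgroup

/-- A graph is a line graph if it is isomorphic to the line graph of some graph. -/
def IsLineGraph {V : Type} (Γ : SimpleGraph V) : Prop :=
  ∃ (W : Type) (H : SimpleGraph W), Nonempty (Γ ≃g H.lineGraph)

/-- The power graph of a group: distinct `x`, `y` are adjacent iff one is a power
of the other. -/
def powerGraph (G : Type) [Group G] : SimpleGraph G where
  Adj x y := x ≠ y ∧ (x ∈ zpowers y ∨ y ∈ zpowers x)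
  symm := ⟨by rintro x y ⟨hne, h⟩; exact ⟨hne.symm, h.symm⟩⟩
  loopless := ⟨by rintro x ⟨hne, _⟩; exact hne rfl⟩

/-- The enhanced power graph of a group: distinct `x`, `y` are adjacent iff both are
powers of a common element. -/
def enhancedPowerGraph (G : Type) [Group G] : SimpleGraph G where
  Adj x y := x ≠ y ∧ ∃ z : G, x ∈ zpowers z ∧ y ∈ zpowers z
  symm := ⟨by rintro x y ⟨hne, z, hx, hy⟩; exact ⟨hne.symm, z, hy, hx⟩⟩
  loopless := ⟨by rintro x ⟨hne, _⟩; exact hne rfl⟩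

/-- A vertex is dominating if it is adjacent to all other vertices. -/
def IsDominatingVertex {V : Type} (Γ : SimpleGraph V) (v : V) : Prop :=
  ∀ w : V, w ≠ v → Γ.Adj v w

/-- The graph induced on the non-dominating vertices. -/
def properGraph {V : Type} (Γ : SimpleGraph V) :
    SimpleGraph {v : V | ¬ IsDominatingVertex Γ v} :=
  Γ.induce {v : V | ¬ IsDominatingVertex Γ v}

/-- The proper power graph `P**(G)`. -/
abbrev properPowerGraph (G : Type) [Group G] := properGraph (powerGraph G)

/-- The proper enhanced power graph `P_E**(G)`. -/
abbrev properEnhancedPowerGraph (G : Type) [Group G] := properGraph (enhancedPowerGraph G)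

/-- A maximal cyclic subgroup: cyclic and not properly contained in a cyclic subgroup. -/
def IsMaxCyclic {G : Type} [Group G] (M : Subgroup G) : Prop :=
  IsCyclic M ∧ ∀ N : Subgroup G, IsCyclic N → M ≤ N → N = M

/-- `T(G)`: the intersection of all maximal cyclic subgroups of `G`. -/
def cyclicCore (G : Type) [Group G] : Subgroup G :=
  ⨅ (M : Subgroup G) (_ : IsMaxCyclic M), M

/-- `G` is an elementary abelian 2-group `Z₂ × ⋯ × Z₂`. -/
def IsElemAbelianTwo (G : Type) [Group G] : Prop :=
  ∃ k : ℕ, 1 ≤ k ∧ Nonempty (G ≃* (Fin k → Multiplicative (ZMod 2)))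

/-!
In a line graph, the common neighbours of an edge `e₁ e₂` are, with at most one exception (the
edge joining their far endpoints), edges through their common endpoint, so they form a clique once
that exception is removed. In a group of odd order `t ≠ t⁻¹` for `t ≠ 1`, so every nontrivial cyclic
subgroup has two generators `x ≠ x⁻¹`. If maximal cyclic subgroups `M ≠ N` share an element
`t ∉ T(G)`, the generators of `M` and of `N` are common neighbours of the edge `t — t⁻¹` of
`P_E**(G)`; some generator of `M` and some generator of `N` avoid the exception, yet they are not
adjacent, since a generator of a maximal cyclic subgroup is adjacent only to its elements.
Conversely, if distinct maximal cyclic subgroups meet exactly in `T(G)`, every vertex of `P_E**(G)`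
lies in a unique maximal cyclic subgroup, so `P_E**(G)` is a disjoint union of cliques: the line
graph of a disjoint union of stars.
-/

namespace SimpleGraph

variable {W : Type*} {H : SimpleGraph W}

theorem exists_isClique_lineGraph_commonNeighbors_diff {e₁ e₂ : H.edgeSet}
    (h : H.lineGraph.Adj e₁ e₂) :
    ∃ e, H.lineGraph.IsClique (H.lineGraph.commonNeighbors e₁ e₂ \ {e}) := by
  obtain ⟨hne, a, ha₁, ha₂⟩ := lineGraph_adj_iff_exists.mp h
  obtain ⟨b, hb⟩ := Sym2.mem_iff_exists.mp ha₁
  obtain ⟨c, hc⟩ := Sym2.mem_iff_exists.mp ha₂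
  have hbc : b ≠ c := by rintro rfl; exact hne (Subtype.ext (hb.trans hc.symm))
  have mem_or_eq : ∀ e ∈ H.lineGraph.commonNeighbors e₁ e₂,
      a ∈ (e : Sym2 W) ∨ (e : Sym2 W) = s(b, c) := by
    rintro e ⟨he₁, he₂⟩
    obtain ⟨-, p, hp₁, hp⟩ := lineGraph_adj_iff_exists.mp he₁
    obtain ⟨-, q, hq₂, hq⟩ := lineGraph_adj_iff_exists.mp he₂
    rw [hb, Sym2.mem_iff] at hp₁
    rw [hc, Sym2.mem_iff] at hq₂
    rcases hp₁ with rfl | rfl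
    · exact .inl hp
    rcases hq₂ with rfl | rfl
    · exact .inl hq
    exact .inr ((Sym2.mem_and_mem_iff hbc).mp ⟨hp, hq⟩)
  -- `z` is the edge `s(b, c)` if there is one.
  obtain ⟨z, hz⟩ : ∃ z : H.edgeSet, ∀ e : H.edgeSet, (e : Sym2 W) = s(b, c) → e = z := by
    by_cases hbc' : s(b, c) ∈ H.edgeSet
    · exact ⟨⟨_, hbc'⟩, fun e he => Subtype.ext he⟩
    · exact ⟨e₁, fun e he => absurd (he ▸ e.2) hbc'⟩
  have mem_of_ne : ∀ e ∈ H.lineGraph.commonNeighbors e₁ e₂ \ {z}, a ∈ (e : Sym2 W) :=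
    fun e ⟨he, hez⟩ => (mem_or_eq e he).resolve_right fun hbc_eq => hez (hz e hbc_eq)
  exact ⟨z, fun x hx y hy hxy =>
    lineGraph_adj_iff_exists.mpr ⟨hxy, a, mem_of_ne x hx, mem_of_ne y hy⟩⟩

end SimpleGraph

theorem IsLineGraph.exists_isClique_commonNeighbors_diff {V : Type} {Γ : SimpleGraph V}
    (hΓ : IsLineGraph Γ) {u v : V} (h : Γ.Adj u v) :
    ∃ z, Γ.IsClique (Γ.commonNeighbors u v \ {z}) := by
  obtain ⟨W, H, ⟨ψ⟩⟩ := hΓ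
  obtain ⟨e, he⟩ :=
    SimpleGraph.exists_isClique_lineGraph_commonNeighbors_diff (ψ.map_adj_iff.mpr h)
  have mem : ∀ x ∈ Γ.commonNeighbors u v \ {ψ.symm e},
      ψ x ∈ H.lineGraph.commonNeighbors (ψ u) (ψ v) \ {e} := by
    rintro x ⟨⟨hux, hvx⟩, hxe⟩
    exact ⟨⟨ψ.map_adj_iff.mpr hux, ψ.map_adj_iff.mpr hvx⟩,
      fun hx => hxe (ψ.eq_symm_apply.mpr hx)⟩
  exact ⟨ψ.symm e, fun x hx y hy hxy =>
    ψ.map_adj_iff.mp (he (mem x hx) (mem y hy) (ψ.injective.ne hxy))⟩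

theorem isLineGraph_of_adj_iff {V ι : Type} {Γ : SimpleGraph V} (c : V → ι)
    (h : ∀ v w, Γ.Adj v w ↔ v ≠ w ∧ c v = c w) : IsLineGraph Γ := by
  let H : SimpleGraph (V ⊕ ι) := .fromEdgeSet (Set.range fun v => s(.inl v, .inr (c v)))
  have hedge : ∀ v, s(.inl v, .inr (c v)) ∈ H.edgeSet := fun v => by simp [H]
  let f : V → H.edgeSet := fun v => ⟨_, hedge v⟩
  have hf : Function.Bijective f := by
    refine ⟨fun v w hvw => (by simpa [f] using hvw : v = w ∧ c v = c w).1, ?_⟩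
    rintro ⟨e, he⟩
    obtain ⟨⟨v, rfl⟩, -⟩ := (SimpleGraph.edgeSet_fromEdgeSet _ ▸ he :)
    exact ⟨v, rfl⟩
  refine ⟨V ⊕ ι, H, ⟨⟨Equiv.ofBijective f hf, fun {v w} => ?_⟩⟩⟩
  obtain rfl | hvw := eq_or_ne v w <;> simp [SimpleGraph.lineGraph_adj_iff_exists, f, *]

section Group

variable {G : Type} [Group G]

theorem inv_ne_self_of_odd_natCard (hodd : Odd (Nat.card G)) {g : G} (hg : g ≠ 1) : g⁻¹ ≠ g := by
  intro h
  have hdvd : orderOf g ∣ 2 :=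
    orderOf_dvd_iff_pow_eq_one.mpr ((sq g).trans (mul_eq_one_iff_eq_inv.mpr h.symm))
  exact hg (orderOf_eq_one_iff.mp (Nat.eq_one_of_dvd_coprimes hodd.coprime_two_left hdvd
    (orderOf_dvd_natCard g)))

theorem exists_zpowers_eq_ne_of_odd_natCard (hodd : Odd (Nat.card G)) {K : Subgroup G}
    (hK : IsCyclic K) (hK1 : K ≠ ⊥) (z : G) : ∃ g, zpowers g = K ∧ g ≠ z := by
  obtain ⟨x, rfl⟩ := K.isCyclic_iff_exists_zpowers_eq_top.mp hK
  have hx : x⁻¹ ≠ x := inv_ne_self_of_odd_natCard hodd (mt zpowers_eq_bot.mpr hK1)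
  by_cases hxz : x = z
  · exact ⟨x⁻¹, zpowers_inv, hxz ▸ hx⟩
  · exact ⟨x, rfl, hxz⟩

theorem exists_isMaxCyclic_mem [Finite G] (g : G) : ∃ M : Subgroup G, IsMaxCyclic M ∧ g ∈ M := by
  obtain ⟨M, hM, hmax⟩ := Set.Finite.exists_maximalFor id
    {H : Subgroup G | IsCyclic H ∧ g ∈ H} (Set.toFinite _)
    ⟨zpowers g, inferInstance, mem_zpowers g⟩
  exact ⟨M, ⟨hM.1, fun N hN hMN => le_antisymm (hmax ⟨hN, hMN hM.2⟩ hMN) hMN⟩, hM.2⟩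

theorem mem_cyclicCore_iff {g : G} :
    g ∈ cyclicCore G ↔ ∀ M : Subgroup G, IsMaxCyclic M → g ∈ M := by
  simp [cyclicCore, mem_iInf]

theorem cyclicCore_le {M : Subgroup G} (hM : IsMaxCyclic M) : cyclicCore G ≤ M :=
  fun _ hg => mem_cyclicCore_iff.mp hg M hM

theorem enhancedPowerGraph_adj_of_mem {K : Subgroup G} (hK : IsCyclic K) {x y : G}
    (hx : x ∈ K) (hy : y ∈ K) (hxy : x ≠ y) : (enhancedPowerGraph G).Adj x y := by
  obtain ⟨z, rfl⟩ := K.isCyclic_iff_exists_zpowers_eq_top.mp hK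
  exact ⟨hxy, z, hx, hy⟩

theorem IsMaxCyclic.mem_of_enhancedPowerGraph_adj {x y : G} (hx : IsMaxCyclic (zpowers x))
    (h : (enhancedPowerGraph G).Adj x y) : y ∈ zpowers x := by
  obtain ⟨-, z, hxz, hyz⟩ := h
  rwa [← hx.2 (zpowers z) inferInstance (zpowers_le.mpr hxz)]

theorem enhancedPowerGraph_adj_iff [Finite G] {x y : G} :
    (enhancedPowerGraph G).Adj x y ↔ x ≠ y ∧ ∃ M, IsMaxCyclic M ∧ x ∈ M ∧ y ∈ M := by
  refine ⟨fun ⟨hxy, z, hx, hy⟩ => ?_, fun ⟨hxy, M, hM, hx, hy⟩ => ?_⟩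
  · obtain ⟨M, hM, hz⟩ := exists_isMaxCyclic_mem z
    exact ⟨hxy, M, hM, zpowers_le.mpr hz hx, zpowers_le.mpr hz hy⟩
  · exact enhancedPowerGraph_adj_of_mem hM.1 hx hy hxy

theorem isDominatingVertex_enhancedPowerGraph_iff [Finite G] {v : G} :
    IsDominatingVertex (enhancedPowerGraph G) v ↔ v ∈ cyclicCore G := by
  refine ⟨fun hv => mem_cyclicCore_iff.mpr fun M hM => ?_, fun hv w hwv => ?_⟩
  · obtain ⟨z, rfl⟩ := M.isCyclic_iff_exists_zpowers_eq_top.mp hM.1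
    obtain rfl | hzv := eq_or_ne z v
    · exact mem_zpowers z
    · exact hM.mem_of_enhancedPowerGraph_adj (hv z hzv).symm
  · obtain ⟨M, hM, hw⟩ := exists_isMaxCyclic_mem w
    exact enhancedPowerGraph_adj_of_mem hM.1 (mem_cyclicCore_iff.mp hv M hM) hw hwv.symm

theorem IsMaxCyclic.inf_eq_cyclicCore_of_isLineGraph [Finite G] (hodd : Odd (Nat.card G))
    (hΓ : IsLineGraph (properEnhancedPowerGraph G)) {M N : Subgroup G} (hM : IsMaxCyclic M)
    (hN : IsMaxCyclic N) (hMN : M ≠ N) : M ⊓ N = cyclicCore G := by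
  refine le_antisymm (fun t ⟨htM, htN⟩ => ?_) (le_inf (cyclicCore_le hM) (cyclicCore_le hN))
  by_contra ht
  have vertex : ∀ {g : G}, g ∉ cyclicCore G →
      g ∈ {v : G | ¬ IsDominatingVertex (enhancedPowerGraph G) v} :=
    mt isDominatingVertex_enhancedPowerGraph_iff.mp
  let u : {v : G | ¬ IsDominatingVertex (enhancedPowerGraph G) v} := ⟨t, vertex ht⟩
  let u' : {v : G | ¬ IsDominatingVertex (enhancedPowerGraph G) v} :=
    ⟨t⁻¹, vertex (by rwa [inv_mem_iff])⟩
  have ht1 : t ≠ 1 := fun h => ht (h ▸ one_mem _)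
  obtain ⟨z, hz⟩ := hΓ.exists_isClique_commonNeighbors_diff (u := u) (v := u')
    (enhancedPowerGraph_adj_of_mem (isCyclic_zpowers t) (mem_zpowers t)
      (inv_mem (mem_zpowers t)) (inv_ne_self_of_odd_natCard hodd ht1).symm)
  have generator : ∀ {K L : Subgroup G}, IsMaxCyclic K → IsMaxCyclic L → K ≠ L → t ∈ K → t ∈ L →
      ∃ g : {v : G | ¬ IsDominatingVertex (enhancedPowerGraph G) v},
        zpowers (g : G) = K ∧ (g : G) ∉ L ∧
          g ∈ (properEnhancedPowerGraph G).commonNeighbors u u' \ {z} := by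
    intro K L hK hL hKL htK htL
    have hKL_not_le : ¬ K ≤ L := fun h => hKL (hK.2 L hL.1 h).symm
    obtain ⟨g, hgK, hgz⟩ := exists_zpowers_eq_ne_of_odd_natCard hodd hK.1
      (fun h => hKL_not_le (h ▸ bot_le)) z
    have hgL : g ∉ L := fun h => hKL_not_le (hgK ▸ zpowers_le.mpr h)
    have hg : g ∈ K := hgK ▸ mem_zpowers g
    refine ⟨⟨g, vertex fun h => hgL (cyclicCore_le hL h)⟩, hgK, hgL, ⟨?_, ?_⟩, ?_⟩
    · exact enhancedPowerGraph_adj_of_mem hK.1 htK hg fun (h : t = g) => hgL (h ▸ htL)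
    · exact enhancedPowerGraph_adj_of_mem hK.1 (inv_mem htK) hg
        fun (h : t⁻¹ = g) => hgL (h ▸ inv_mem htL)
    · exact fun h => hgz (congrArg Subtype.val h)
  obtain ⟨x, hxM, hxN, hx⟩ := generator hM hN hMN htM htN
  obtain ⟨y, hyN, hyM, hy⟩ := generator hN hM hMN.symm htN htM
  have hxy : x ≠ y := fun h => hxN (h ▸ hyN ▸ mem_zpowers (y : G))
  exact hyM (hxM ▸ (hxM ▸ hM).mem_of_enhancedPowerGraph_adj (hz hx hy hxy))

theorem isLineGraph_properEnhancedPowerGraph_of_inf_eq_cyclicCore [Finite G]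
    (h : ∀ M N : Subgroup G, IsMaxCyclic M → IsMaxCyclic N → M ≠ N → M ⊓ N = cyclicCore G) :
    IsLineGraph (properEnhancedPowerGraph G) := by
  choose c hc using fun v : {v : G | ¬ IsDominatingVertex (enhancedPowerGraph G) v} =>
    exists_isMaxCyclic_mem (v : G)
  have unique : ∀ v M, IsMaxCyclic M → v.1 ∈ M → M = c v := by
    intro v M hM hvM
    by_contra hne
    have hv : (v : G) ∈ M ⊓ c v := ⟨hvM, (hc v).2⟩
    rw [h M (c v) hM (hc v).1 hne] at hv
    exact v.2 (isDominatingVertex_enhancedPowerGraph_iff.mpr hv)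
  refine isLineGraph_of_adj_iff c fun v w => ?_
  change (enhancedPowerGraph G).Adj v w ↔ _
  rw [enhancedPowerGraph_adj_iff, Subtype.coe_ne_coe]
  refine and_congr_right fun _ => ⟨fun ⟨M, hM, hv, hw⟩ => ?_, fun hvw => ?_⟩
  · exact (unique v M hM hv).symm.trans (unique w M hM hw)
  · exact ⟨c v, (hc v).1, (hc v).2, hvw ▸ (hc w).2⟩

end Group

theorem properEnhancedPowerGraph_isLineGraph_iff_of_odd_general (G : Type) [Group G] [Fintype G]
    (hodd : Odd (Nat.card G)) :
    IsLineGraph (properEnhancedPowerGraph G) ↔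
      (∀ M N : Subgroup G, IsMaxCyclic M → IsMaxCyclic N → M ≠ N →
        M ⊓ N = cyclicCore G) :=
  ⟨fun hΓ _ _ hM hN hMN => hM.inf_eq_cyclicCore_of_isLineGraph hodd hΓ hN hMN,
    isLineGraph_properEnhancedPowerGraph_of_inf_eq_cyclicCore⟩

/-- for a finite non-cyclic group of odd order, `P_E**(G)` is a line graph iff
the intersection of any two distinct maximal cyclic subgroups equals `T(G)`. -/
theorem properEnhancedPowerGraph_isLineGraph_iff_of_odd (G : Type) [Group G] [Fintype G]
    (hnc : ¬ IsCyclic G) (hodd : Odd (Nat.card G)) :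
    IsLineGraph (properEnhancedPowerGraph G) ↔
      (∀ M N : Subgroup G, IsMaxCyclic M → IsMaxCyclic N → M ≠ N →
        M ⊓ N = cyclicCore G) :=
  properEnhancedPowerGraph_isLineGraph_iff_of_odd_general G hodd
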